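/- Let X and Y be compact, locally connected Hausdorff topological spaces and let G and H be free abelian groups. The ℤ-bilinear map (f, g) ↦ ((x, y) ↦ f(x) ⊗ g(y)) from LocallyConstant X G × LocallyConstant Y H to LocallyConstant (X × Y) (G ⊗_ℤ H) induces a ℤ-linear map (LocallyConstant X G) ⊗_ℤ (LocallyConstant Y H) → LocallyConstant (X × Y) (G ⊗_ℤ H), and this map is an isomorphism of abelian groups. -/

import Mathlib

open scoped TensorProduct

/-!
On a locally connected space the connected components are open, so a locally constant function
is the same thing as an arbitrary function on the set of components; for a compact space this set
is finite. The components of `X × Y` are the products of those of `X` and `Y`, so the claim reduces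
to `(ι → G) ⊗ (κ → H) ≅ (ι × κ → G ⊗ H)` for finite `ι`, `κ`, i.e. to the distributivity of
`⊗` over finite direct sums.
-/

section ConnectedComponents

variable {α β : Type*} [TopologicalSpace α] [TopologicalSpace β]

theorem ConnectedComponents.mk_prod_eq_mk_prod_iff {x x' : α} {y y' : β} :
    (mk (x, y) : ConnectedComponents (α × β)) = mk (x', y') ↔ mk x = mk x' ∧ mk y = mk y' := by
  simp only [coe_eq_coe, connectedComponent_prod]
  exact Set.prod_eq_prod_iff_of_nonempty ⟨(x, y), mem_connectedComponent, mem_connectedComponent⟩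

noncomputable def ConnectedComponents.prodEquiv :
    ConnectedComponents (α × β) ≃ ConnectedComponents α × ConnectedComponents β :=
  Equiv.ofBijective
    (Quotient.lift (fun p ↦ (mk p.1, mk p.2)) fun _ _ h ↦
      Prod.ext_iff.2 (mk_prod_eq_mk_prod_iff.1 (Quotient.sound h)))
    ⟨fun c c' ↦ by
      induction c, c' using Quotient.inductionOn₂ with
      | h p p' => exact fun h ↦ mk_prod_eq_mk_prod_iff.2 (Prod.ext_iff.1 h),
    fun ⟨c, d⟩ ↦ by
      induction c, d using Quotient.inductionOn₂ with
      | h x y => exact ⟨mk (x, y), rfl⟩⟩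

@[simp]
theorem ConnectedComponents.prodEquiv_mk (p : α × β) :
    prodEquiv (mk p) = (mk p.1, mk p.2) := rfl

end ConnectedComponents

namespace LocallyConstant

variable (R M : Type*) [Semiring R] [AddCommMonoid M] [Module R M]
  (Z : Type*) [TopologicalSpace Z] [LocallyConnectedSpace Z]

noncomputable def linearEquivFunConnectedComponents :
    LocallyConstant Z M ≃ₗ[R] (ConnectedComponents Z → M) where
  toFun f := Quotient.lift f fun _ _ h ↦
    f.apply_eq_of_isPreconnected isPreconnected_connectedComponent
      (h ▸ mem_connectedComponent) mem_connectedComponent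
  invFun g := ⟨g ∘ ConnectedComponents.mk,
    (IsLocallyConstant.of_discrete g).comp_continuous ConnectedComponents.continuous_coe⟩
  map_add' _ _ := funext <| ConnectedComponents.surjective_coe.forall.2 fun _ ↦ rfl
  map_smul' _ _ := funext <| ConnectedComponents.surjective_coe.forall.2 fun _ ↦ rfl
  left_inv _ := rfl
  right_inv _ := funext <| ConnectedComponents.surjective_coe.forall.2 fun _ ↦ rfl

variable {R M Z}

@[simp]
theorem linearEquivFunConnectedComponents_apply_mk (f : LocallyConstant Z M) (x : Z) :
    linearEquivFunConnectedComponents R M Z f (.mk x) = f x := rfl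

@[simp]
theorem linearEquivFunConnectedComponents_symm_apply (g : ConnectedComponents Z → M) (x : Z) :
    (linearEquivFunConnectedComponents R M Z).symm g x = g (.mk x) := rfl

end LocallyConstant

section FunTensorFun

variable (R M N ι κ : Type*) [CommSemiring R] [AddCommMonoid M] [Module R M]
  [AddCommMonoid N] [Module R N] [Finite ι] [Finite κ]

noncomputable def funTensorFunEquiv :
    (ι → M) ⊗[R] (κ → N) ≃ₗ[R] (ι × κ → M ⊗[R] N) :=
  TensorProduct.congr (Finsupp.linearEquivFunOnFinite R M ι).symm
      (Finsupp.linearEquivFunOnFinite R N κ).symm ≪≫ₗ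
    finsuppTensorFinsupp R R M N ι κ ≪≫ₗ Finsupp.linearEquivFunOnFinite R _ _

variable {R M N ι κ}

@[simp]
theorem funTensorFunEquiv_tmul (f : ι → M) (g : κ → N) (i : ι) (j : κ) :
    funTensorFunEquiv R M N ι κ (f ⊗ₜ g) (i, j) = f i ⊗ₜ g j := by
  simp [funTensorFunEquiv]

end FunTensorFun

namespace LocallyConstant

variable (R M N X Y : Type*) [CommSemiring R] [AddCommMonoid M] [Module R M]
  [AddCommMonoid N] [Module R N] [TopologicalSpace X] [TopologicalSpace Y]
  [CompactSpace X] [CompactSpace Y] [LocallyConnectedSpace X] [LocallyConnectedSpace Y]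

noncomputable def tensorEquivProd :
    LocallyConstant X M ⊗[R] LocallyConstant Y N ≃ₗ[R] LocallyConstant (X × Y) (M ⊗[R] N) :=
  TensorProduct.congr (linearEquivFunConnectedComponents R M X)
      (linearEquivFunConnectedComponents R N Y) ≪≫ₗ
    funTensorFunEquiv R M N _ _ ≪≫ₗ
    LinearEquiv.funCongrLeft R _ ConnectedComponents.prodEquiv ≪≫ₗ
    (linearEquivFunConnectedComponents R _ (X × Y)).symm

variable {R M N X Y}

@[simp]
theorem tensorEquivProd_tmul_apply (f : LocallyConstant X M) (g : LocallyConstant Y N)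
    (x : X) (y : Y) : tensorEquivProd R M N X Y (f ⊗ₜ g) (x, y) = f x ⊗ₜ g y := by
  simp [tensorEquivProd]

end LocallyConstant

theorem stmt8_general (X Y : Type*) [TopologicalSpace X] [TopologicalSpace Y]
    [CompactSpace X] [CompactSpace Y]
    [LocallyConnectedSpace X] [LocallyConnectedSpace Y]
    (G H : Type*) [AddCommGroup G] [AddCommGroup H] :
    ∃ Φ : (LocallyConstant X G) ⊗[ℤ] (LocallyConstant Y H) →ₗ[ℤ]
        LocallyConstant (X × Y) (G ⊗[ℤ] H),
      (∀ (f : LocallyConstant X G) (g : LocallyConstant Y H) (x : X) (y : Y),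
        Φ (f ⊗ₜ[ℤ] g) (x, y) = f x ⊗ₜ[ℤ] g y) ∧
      Function.Bijective Φ :=
  ⟨(LocallyConstant.tensorEquivProd ℤ G H X Y).toLinearMap,
    LocallyConstant.tensorEquivProd_tmul_apply, (LocallyConstant.tensorEquivProd ℤ G H X Y).bijective⟩

/-- **Equation (4.4) (tensor product of sections, Proposition 4.28).** Let `X`, `Y` be
compact, locally connected Hausdorff spaces and `G`, `H` free abelian groups. The
ℤ-bilinear map `(f, g) ↦ ((x, y) ↦ f x ⊗ g y)` induces a ℤ-linear map
`(LocallyConstant X G) ⊗ℤ (LocallyConstant Y H) → LocallyConstant (X × Y) (G ⊗ℤ H)`,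
and this map is an isomorphism of abelian groups. -/
theorem stmt8 (X Y : Type*) [TopologicalSpace X] [TopologicalSpace Y]
    [CompactSpace X] [CompactSpace Y] [T2Space X] [T2Space Y]
    [LocallyConnectedSpace X] [LocallyConnectedSpace Y]
    (G H : Type*) [AddCommGroup G] [AddCommGroup H]
    [Module.Free ℤ G] [Module.Free ℤ H] :
    ∃ Φ : (LocallyConstant X G) ⊗[ℤ] (LocallyConstant Y H) →ₗ[ℤ]
        LocallyConstant (X × Y) (G ⊗[ℤ] H),
      (∀ (f : LocallyConstant X G) (g : LocallyConstant Y H) (x : X) (y : Y),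
        Φ (f ⊗ₜ[ℤ] g) (x, y) = f x ⊗ₜ[ℤ] g y) ∧
      Function.Bijective Φ :=
  stmt8_general X Y G H
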